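/- Under the hypotheses: $\rho > \max\{0,-\alpha\}$, $0 < \gamma < \sigma$, $(\nu_n)$ a positive decreasing sequence with partial sums $V_n$, $\beta \le \nu_1/2$, $U(x) = \int_0^x \mu(t)\,dt$ for positive continuous $\mu$, $\delta \in \{-1,1\}$, the weight coefficient $\varpi_{\delta}(\sigma, n) = \int_0^{\infty} \frac{\operatorname{csch}(\rho U^{\delta\gamma}(x)(V_n-\beta)^{\gamma})}{e^{\alpha U^{\delta\gamma}(x)(V_n-\beta)^{\gamma}}} \cdot \frac{(V_n-\beta)^{\sigma}\mu(x)}{U^{1-\delta\sigma}(x)}\,dx$ satisfies $\varpi_{\delta}(\sigma, n) \le k(\sigma)$ for all $n \in \mathbb{N}$, where $k(\sigma) = \int_0^{\infty} \frac{\operatorname{csch}(\rho u^{\gamma})}{e^{\alpha u^{\gamma}}} u^{\sigma-1}\,du$. Moreover, if $U(\infty) = \infty$, then $\varpi_{\delta}(\sigma, n) = k(\sigma)$ for all $n$. -/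

import Mathlib

/-!
Substituting `u = (V_n - β) U(x)^δ` turns the weight coefficient into the integral of the
kernel `csch (ρ u^γ) e^{-α u^γ} u^{σ-1}` over the image of `(0, ∞)`, a subset of `(0, ∞)`; the
kernel is positive and integrable there because `csch t ≤ (t⁻¹ + 2) e^{-t}` and `ρ + α > 0`.
If `U(∞) = ∞`, the image is all of `(0, ∞)`.
-/

/-- The hyperbolic cosecant function. -/
noncomputable def csch (u : ℝ) : ℝ := 2 / (Real.exp u - Real.exp (-u))

open Real Set MeasureTheory Filter

lemma csch_pos {t : ℝ} (ht : 0 < t) : 0 < csch t := by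
  have : exp (-t) < exp t := exp_lt_exp.2 (by linarith)
  exact div_pos two_pos (by linarith)

@[fun_prop]
lemma measurable_csch : Measurable csch := by
  unfold csch; fun_prop

/-- From `2t + 1 ≤ e^{2t}`. -/
lemma csch_le_inv_add_two_mul_exp_neg {t : ℝ} (ht : 0 < t) :
    csch t ≤ (t⁻¹ + 2) * exp (-t) := by
  have hexp : 2 * t + 1 ≤ exp t * exp t := by
    rw [← exp_add, ← two_mul]; exact add_one_le_exp _
  have hs : 1 < exp t := one_lt_exp_iff.2 ht
  rw [csch, exp_neg, div_le_iff₀ (by field_simp; nlinarith)]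
  field_simp
  nlinarith

noncomputable def cschKernel (α ρ γ σ u : ℝ) : ℝ :=
  csch (ρ * u ^ γ) / exp (α * u ^ γ) * u ^ (σ - 1)

lemma cschKernel_pos (α γ σ : ℝ) {ρ u : ℝ} (hρ : 0 < ρ) (hu : 0 < u) :
    0 < cschKernel α ρ γ σ u := by
  have := csch_pos (mul_pos hρ (rpow_pos_of_pos hu γ))
  unfold cschKernel
  positivity

lemma cschKernel_le {α ρ γ σ u : ℝ} (hρ : 0 < ρ) (hu : 0 < u) :
    cschKernel α ρ γ σ u ≤ ρ⁻¹ * (u ^ (σ - γ - 1) * exp (-(ρ + α) * u ^ γ))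
      + 2 * (u ^ (σ - 1) * exp (-(ρ + α) * u ^ γ)) := by
  have huγ : 0 < u ^ γ := rpow_pos_of_pos hu γ
  have hcsch := csch_le_inv_add_two_mul_exp_neg (mul_pos hρ huγ)
  have hsplit : u ^ (σ - γ - 1) = (u ^ γ)⁻¹ * u ^ (σ - 1) := by
    rw [← rpow_neg hu.le, ← rpow_add hu]; ring_nf
  have hexp : exp (-(ρ + α) * u ^ γ) = exp (-(ρ * u ^ γ)) / exp (α * u ^ γ) := by
    rw [← exp_sub]; ring_nf
  calc cschKernel α ρ γ σ u
      ≤ ((ρ * u ^ γ)⁻¹ + 2) * exp (-(ρ * u ^ γ)) / exp (α * u ^ γ) * u ^ (σ - 1) := by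
        unfold cschKernel; gcongr
    _ = _ := by rw [hsplit, hexp, mul_inv]; ring

lemma integrableOn_cschKernel {α ρ γ σ : ℝ} (hρ : 0 < ρ) (hρα : 0 < ρ + α) (hγ : 0 < γ)
    (hγσ : γ < σ) : IntegrableOn (cschKernel α ρ γ σ) (Ioi 0) := by
  have hbound : IntegrableOn (fun u => ρ⁻¹ * (u ^ (σ - γ - 1) * exp (-(ρ + α) * u ^ γ))
      + 2 * (u ^ (σ - 1) * exp (-(ρ + α) * u ^ γ))) (Ioi 0) :=
    ((integrableOn_rpow_mul_exp_neg_mul_rpow (by linarith) hγ hρα).const_mul _).add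
      ((integrableOn_rpow_mul_exp_neg_mul_rpow (by linarith) hγ hρα).const_mul _)
  refine hbound.mono' (by unfold cschKernel; fun_prop : Measurable _).aestronglyMeasurable ?_
  filter_upwards [ae_restrict_mem measurableSet_Ioi] with u hu
  rw [norm_of_nonneg (cschKernel_pos α γ σ hρ hu).le]
  exact cschKernel_le hρ hu

section Primitive

variable {μ U : ℝ → ℝ}

lemma primitive_eq_intervalIntegral (hU : ∀ x, U x = ∫ t in Ioc (0 : ℝ) x, μ t) {x : ℝ}
    (hx : 0 ≤ x) : U x = ∫ t in (0 : ℝ)..x, μ t := by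
  rw [hU, intervalIntegral.integral_of_le hx]

lemma intervalIntegrable_of_integrableOn_Ioc (hμint : ∀ x > 0, IntegrableOn μ (Ioc 0 x))
    {x : ℝ} (hx : 0 < x) : IntervalIntegrable μ volume 0 x :=
  (intervalIntegrable_iff_integrableOn_Ioc_of_le hx.le).2 (hμint x hx)

lemma hasDerivAt_primitive (hU : ∀ x, U x = ∫ t in Ioc (0 : ℝ) x, μ t)
    (hμc : ContinuousOn μ (Ioi 0)) (hμint : ∀ x > 0, IntegrableOn μ (Ioc 0 x))
    {x : ℝ} (hx : 0 < x) : HasDerivAt U (μ x) x := by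
  have hderiv := intervalIntegral.integral_hasDerivAt_right
    (intervalIntegrable_of_integrableOn_Ioc hμint hx)
    ⟨Ioi 0, Ioi_mem_nhds hx, hμc.aestronglyMeasurable measurableSet_Ioi⟩
    (hμc.continuousAt (Ioi_mem_nhds hx))
  refine hderiv.congr_of_eventuallyEq ?_
  filter_upwards [Ioi_mem_nhds hx] with y hy
  exact primitive_eq_intervalIntegral hU (le_of_lt hy)

lemma primitive_pos (hU : ∀ x, U x = ∫ t in Ioc (0 : ℝ) x, μ t) (hμ : ∀ t > 0, 0 < μ t)
    (hμint : ∀ x > 0, IntegrableOn μ (Ioc 0 x)) {x : ℝ} (hx : 0 < x) : 0 < U x := by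
  rw [primitive_eq_intervalIntegral hU hx.le]
  exact intervalIntegral.intervalIntegral_pos_of_pos_on
    (intervalIntegrable_of_integrableOn_Ioc hμint hx) (fun t ht => hμ t ht.1) hx

lemma strictMonoOn_primitive (hU : ∀ x, U x = ∫ t in Ioc (0 : ℝ) x, μ t)
    (hμ : ∀ t > 0, 0 < μ t) (hμc : ContinuousOn μ (Ioi 0))
    (hμint : ∀ x > 0, IntegrableOn μ (Ioc 0 x)) : StrictMonoOn U (Ioi 0) := by
  refine strictMonoOn_of_deriv_pos (convex_Ioi 0)
    (fun x hx => (hasDerivAt_primitive hU hμc hμint hx).continuousAt.continuousWithinAt) ?_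
  intro x hx
  rw [interior_Ioi] at hx
  rw [(hasDerivAt_primitive hU hμc hμint hx).deriv]
  exact hμ x hx

lemma surjOn_primitive (hU : ∀ x, U x = ∫ t in Ioc (0 : ℝ) x, μ t)
    (hμint : ∀ x > 0, IntegrableOn μ (Ioc 0 x)) (htop : Tendsto U atTop atTop) :
    SurjOn U (Ioi 0) (Ioi 0) := by
  intro z hz
  obtain ⟨b, hzb, hb⟩ := ((htop.eventually_gt_atTop z).and (eventually_gt_atTop 0)).exists
  have hcont : ContinuousOn U (Icc 0 b) := by
    have hIcc : IntegrableOn μ (Icc 0 b) :=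
      (integrableOn_Icc_iff_integrableOn_Ioc (by simp)).2 (hμint b hb)
    exact (intervalIntegral.continuousOn_primitive hIcc).congr fun x _ => hU x
  have hU0 : U 0 = 0 := by simp [hU]
  obtain ⟨x, hx, hUx⟩ :=
    intermediate_value_Icc hb.le hcont ⟨by rw [hU0]; exact le_of_lt hz, hzb.le⟩
  refine ⟨x, lt_of_le_of_ne hx.1 ?_, hUx⟩
  rintro rfl
  exact hz.ne' (hU0 ▸ hUx).symm

end Primitive

section Substitution

variable {U U' : ℝ → ℝ} {c δ : ℝ}

lemma setIntegral_image_mul_rpow_eq (f : ℝ → ℝ) (hc : 0 < c) (hδ : δ ≠ 0)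
    (hU : ∀ x > 0, HasDerivAt U (U' x) x) (hpos : ∀ x > 0, 0 < U x)
    (hmono : StrictMonoOn U (Ioi 0)) :
    ∫ u in (fun x => c * U x ^ δ) '' Ioi 0, f u
      = ∫ x in Ioi 0, |c * (U' x * δ * U x ^ (δ - 1))| * f (c * U x ^ δ) := by
  have hderiv : ∀ x ∈ Ioi (0 : ℝ), HasDerivWithinAt (fun x => c * U x ^ δ)
      (c * (U' x * δ * U x ^ (δ - 1))) (Ioi 0) x := fun x hx =>
    (((hU x hx).rpow_const (Or.inl (hpos x hx).ne')).const_mul c).hasDerivWithinAt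
  have hinj : InjOn (fun x => c * U x ^ δ) (Ioi 0) := fun x hx y hy hxy =>
    hmono.injOn hx hy <| rpow_left_injOn hδ (hpos x hx).le (hpos y hy).le <|
      mul_left_cancel₀ hc.ne' hxy
  exact integral_image_eq_integral_abs_deriv_smul measurableSet_Ioi hderiv hinj f

lemma image_mul_rpow_subset_Ioi (hc : 0 < c) (hpos : ∀ x > 0, 0 < U x) :
    (fun x => c * U x ^ δ) '' Ioi 0 ⊆ Ioi 0 := by
  rintro _ ⟨x, hx, rfl⟩
  exact mul_pos hc (rpow_pos_of_pos (hpos x hx) δ)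

lemma image_mul_rpow_eq_Ioi (hc : 0 < c) (hδ : δ ≠ 0) (hpos : ∀ x > 0, 0 < U x)
    (hsurj : SurjOn U (Ioi 0) (Ioi 0)) : (fun x => c * U x ^ δ) '' Ioi 0 = Ioi 0 := by
  refine (image_mul_rpow_subset_Ioi hc hpos).antisymm fun y (hy : 0 < y) => ?_
  have hyc : 0 < y / c := div_pos hy hc
  obtain ⟨x, hx, hUx⟩ := hsurj (rpow_pos_of_pos hyc δ⁻¹)
  exact ⟨x, hx, by simp only [hUx, rpow_inv_rpow hyc.le hδ, mul_div_cancel₀ _ hc.ne']⟩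

end Substitution

lemma weight_integrand_eq {α ρ γ σ δ c Ux μx : ℝ} (hδ : |δ| = 1) (hc : 0 < c) (hUx : 0 < Ux)
    (hμx : 0 < μx) :
    csch (ρ * Ux ^ (δ * γ) * c ^ γ) / exp (α * Ux ^ (δ * γ) * c ^ γ)
        * (c ^ σ * μx / Ux ^ (1 - δ * σ))
      = |c * (μx * δ * Ux ^ (δ - 1))| * cschKernel α ρ γ σ (c * Ux ^ δ) := by
  have hpow : ∀ r, (c * Ux ^ δ) ^ r = c ^ r * Ux ^ (δ * r) := fun r => by
    rw [mul_rpow hc.le (rpow_pos_of_pos hUx δ).le, ← rpow_mul hUx.le]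
  have hcσ : c ^ σ = c * c ^ (σ - 1) := by
    conv_lhs => rw [show σ = 1 + (σ - 1) by ring, rpow_add hc, rpow_one]
  have hUσ : (Ux ^ (1 - δ * σ))⁻¹ = Ux ^ (δ - 1) * Ux ^ (δ * (σ - 1)) := by
    rw [← rpow_add hUx, ← rpow_neg hUx.le]; ring_nf
  rw [abs_mul, abs_mul, abs_mul, hδ, abs_of_pos hc, abs_of_pos hμx,
    abs_of_pos (rpow_pos_of_pos hUx _), cschKernel, hpow, hpow, div_eq_mul_inv _ (Ux ^ _),
    hUσ, hcσ]
  ring_nf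

theorem stmt11_general (α ρ γ σ β δ : ℝ)
    (hρ : ρ > max 0 (-α)) (hγ : 0 < γ) (hγσ : γ < σ)
    (hδ : δ = 1 ∨ δ = -1)
    (ν : ℕ → ℝ) (hν : ∀ n ≥ 1, 0 < ν n)
    (V : ℕ → ℝ) (hV : ∀ n, V n = ∑ j ∈ Finset.Icc 1 n, ν j)
    (hβ : β ≤ ν 1 / 2)
    (μ : ℝ → ℝ) (hμ : ∀ t > 0, 0 < μ t) (hμc : ContinuousOn μ (Set.Ioi 0))
    (hμint : ∀ x > 0, MeasureTheory.IntegrableOn μ (Set.Ioc 0 x))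
    (U : ℝ → ℝ) (hU : ∀ x, U x = ∫ t in Set.Ioc (0 : ℝ) x, μ t) :
    (∀ n ≥ 1,
      (∫ x in Set.Ioi (0 : ℝ),
          csch (ρ * U x ^ (δ * γ) * (V n - β) ^ γ) /
              Real.exp (α * U x ^ (δ * γ) * (V n - β) ^ γ) *
            ((V n - β) ^ σ * μ x / U x ^ (1 - δ * σ))) ≤
        ∫ u in Set.Ioi (0 : ℝ), csch (ρ * u ^ γ) / Real.exp (α * u ^ γ) * u ^ (σ - 1)) ∧
    (Filter.Tendsto U Filter.atTop Filter.atTop →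
      ∀ n ≥ 1,
        (∫ x in Set.Ioi (0 : ℝ),
            csch (ρ * U x ^ (δ * γ) * (V n - β) ^ γ) /
                Real.exp (α * U x ^ (δ * γ) * (V n - β) ^ γ) *
              ((V n - β) ^ σ * μ x / U x ^ (1 - δ * σ))) =
          ∫ u in Set.Ioi (0 : ℝ), csch (ρ * u ^ γ) / Real.exp (α * u ^ γ) * u ^ (σ - 1)) := by
  have hρ0 : 0 < ρ := (le_max_left _ _).trans_lt hρ
  have hρα : 0 < ρ + α := by linarith [(le_max_right 0 (-α)).trans_lt hρ]
  have hδ0 : δ ≠ 0 := by rcases hδ with rfl | rfl <;> norm_num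
  have hδabs : |δ| = 1 := by rcases hδ with rfl | rfl <;> norm_num
  have hc : ∀ n ≥ 1, 0 < V n - β := fun n hn => by
    have : ν 1 ≤ V n := hV n ▸ Finset.single_le_sum
      (fun j hj => (hν j (Finset.mem_Icc.1 hj).1).le) (Finset.mem_Icc.2 ⟨le_rfl, hn⟩)
    linarith [hν 1 le_rfl]
  have hUpos : ∀ x > 0, 0 < U x := fun x => primitive_pos hU hμ hμint
  have hweight : ∀ n ≥ 1, (∫ x in Ioi (0 : ℝ),
      csch (ρ * U x ^ (δ * γ) * (V n - β) ^ γ) / exp (α * U x ^ (δ * γ) * (V n - β) ^ γ)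
        * ((V n - β) ^ σ * μ x / U x ^ (1 - δ * σ)))
      = ∫ u in (fun x => (V n - β) * U x ^ δ) '' Ioi 0, cschKernel α ρ γ σ u := fun n hn => by
    rw [setIntegral_image_mul_rpow_eq _ (hc n hn) hδ0
      (fun x => hasDerivAt_primitive hU hμc hμint) hUpos (strictMonoOn_primitive hU hμ hμc hμint)]
    exact setIntegral_congr_fun measurableSet_Ioi fun x hx =>
      weight_integrand_eq hδabs (hc n hn) (hUpos x hx) (hμ x hx)
  refine ⟨fun n hn => ?_, fun htop n hn => ?_⟩
  · rw [hweight n hn]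
    exact setIntegral_mono_set (integrableOn_cschKernel hρ0 hρα hγ hγσ)
      ((ae_restrict_mem measurableSet_Ioi).mono fun u hu => (cschKernel_pos α γ σ hρ0 hu).le)
      (image_mul_rpow_subset_Ioi (hc n hn) hUpos).eventuallyLE
  · rw [hweight n hn, image_mul_rpow_eq_Ioi (hc n hn) hδ0 hUpos (surjOn_primitive hU hμint htop)]
    rfl

theorem stmt11 (α ρ γ σ β δ : ℝ)
    (hρ : ρ > max 0 (-α)) (hγ : 0 < γ) (hγσ : γ < σ)
    (hδ : δ = 1 ∨ δ = -1)
    (ν : ℕ → ℝ) (hν : ∀ n ≥ 1, 0 < ν n)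
    (hdec : ∀ m n, 1 ≤ m → m ≤ n → ν n ≤ ν m)
    (V : ℕ → ℝ) (hV : ∀ n, V n = ∑ j ∈ Finset.Icc 1 n, ν j)
    (hβ : β ≤ ν 1 / 2)
    (μ : ℝ → ℝ) (hμ : ∀ t > 0, 0 < μ t) (hμc : ContinuousOn μ (Set.Ioi 0))
    (hμint : ∀ x > 0, MeasureTheory.IntegrableOn μ (Set.Ioc 0 x))
    (U : ℝ → ℝ) (hU : ∀ x, U x = ∫ t in Set.Ioc (0 : ℝ) x, μ t) :
    (∀ n ≥ 1,
      (∫ x in Set.Ioi (0 : ℝ),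
          csch (ρ * U x ^ (δ * γ) * (V n - β) ^ γ) /
              Real.exp (α * U x ^ (δ * γ) * (V n - β) ^ γ) *
            ((V n - β) ^ σ * μ x / U x ^ (1 - δ * σ))) ≤
        ∫ u in Set.Ioi (0 : ℝ), csch (ρ * u ^ γ) / Real.exp (α * u ^ γ) * u ^ (σ - 1)) ∧
    (Filter.Tendsto U Filter.atTop Filter.atTop →
      ∀ n ≥ 1,
        (∫ x in Set.Ioi (0 : ℝ),
            csch (ρ * U x ^ (δ * γ) * (V n - β) ^ γ) /
                Real.exp (α * U x ^ (δ * γ) * (V n - β) ^ γ) *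
              ((V n - β) ^ σ * μ x / U x ^ (1 - δ * σ))) =
          ∫ u in Set.Ioi (0 : ℝ), csch (ρ * u ^ γ) / Real.exp (α * u ^ γ) * u ^ (σ - 1)) :=
  stmt11_general α ρ γ σ β δ hρ hγ hγσ hδ ν hν V hV hβ μ hμ hμc hμint U hU
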